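/- The generalized Airy function of order 4 satisfies the third-order linear ODE φ'''(x) = x·φ(x) for every x ∈ ℝ. -/

import Mathlib

open MeasureTheory Real Filter

noncomputable def φ (x : ℝ) : ℂ :=
  (1 / (2 * Real.pi)) * ∫ l : ℝ, Complex.exp (Complex.I * l * x - l ^ 4 / 4)

section AiryAux
open Topology

/-- Auxiliary integrand family: `(I l)^n exp(I l x - l^4/4)`. -/
noncomputable def airyAux (n : ℕ) (x : ℝ) (l : ℝ) : ℂ :=
  (Complex.I * l) ^ n * Complex.exp (Complex.I * l * x - l ^ 4 / 4)

lemma continuous_airyAux (n : ℕ) (x : ℝ) : Continuous (airyAux n x) := by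
  unfold airyAux
  fun_prop

lemma norm_airyAux (n : ℕ) (x l : ℝ) :
    ‖airyAux n x l‖ = |l| ^ n * Real.exp (-(l ^ 4 / 4)) := by
  unfold airyAux
  rw [norm_mul, norm_pow, norm_mul, Complex.norm_exp]
  have h1 : (Complex.I * l * x - (l:ℂ) ^ 4 / 4).re = -(l ^ 4 / 4) := by
    simp [Complex.sub_re, Complex.mul_re, Complex.div_re, ← Complex.ofReal_pow]
  rw [h1]
  simp

lemma integrable_airyBound (n : ℕ) :
    Integrable (fun l : ℝ => |l| ^ n * Real.exp (-(l ^ 4 / 4))) := by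
  have h1 : IntegrableOn (fun l : ℝ => |l| ^ n * Real.exp (-(l ^ 4 / 4))) (Set.Ioi 0) := by
    have h := integrableOn_rpow_mul_exp_neg_mul_rpow (s := (n : ℝ)) (p := 4) (b := 1/4)
      (lt_of_lt_of_le (by norm_num) (Nat.cast_nonneg n)) (by norm_num) (by norm_num)
    refine h.congr_fun (fun x hx => ?_) measurableSet_Ioi
    have hx' : (0:ℝ) < x := hx
    beta_reduce
    rw [show (4:ℝ) = ((4:ℕ):ℝ) by norm_num, Real.rpow_natCast, Real.rpow_natCast,
      abs_of_pos hx']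
    ring_nf
  rw [← integrableOn_univ, ← Set.Iio_union_Ici, integrableOn_union,
    integrableOn_Ici_iff_integrableOn_Ioi (f := fun l : ℝ => |l| ^ n * Real.exp (-(l ^ 4 / 4))) (b := 0)]
  refine ⟨?_, h1⟩
  rw [← (Measure.measurePreserving_neg (volume : Measure ℝ)).integrableOn_comp_preimage
      (Homeomorph.neg ℝ).measurableEmbedding]
  simp only [Function.comp_def, Set.neg_preimage, Set.neg_Iio, neg_neg, neg_zero, abs_neg]
  have e4 : ∀ x : ℝ, (-x) ^ 4 = x ^ 4 := fun x => by ring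
  simp only [e4]
  exact h1

lemma integrable_airyAux (n : ℕ) (x : ℝ) : Integrable (airyAux n x) := by
  refine (integrable_airyBound n).mono' ((continuous_airyAux n x).aestronglyMeasurable) ?_
  filter_upwards with l
  rw [norm_airyAux]

lemma hasDerivAt_airyAux (n : ℕ) (l x : ℝ) :
    HasDerivAt (fun y : ℝ => airyAux n y l) (airyAux (n + 1) x l) x := by
  have hz : HasDerivAt (fun z : ℂ => Complex.I * l * z - l ^ 4 / 4) (Complex.I * l) (x : ℂ) := by
    simpa using ((hasDerivAt_id (x : ℂ)).const_mul (Complex.I * l)).sub_const ((l:ℂ) ^ 4 / 4)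
  have h2 := (hz.comp_ofReal).cexp.const_mul ((Complex.I * l) ^ n)
  refine h2.congr_deriv ?_
  unfold airyAux
  ring

lemma hasDerivAt_integral_airyAux (n : ℕ) (x : ℝ) :
    HasDerivAt (fun y : ℝ => ∫ l : ℝ, airyAux n y l) (∫ l : ℝ, airyAux (n + 1) x l) x := by
  have := hasDerivAt_integral_of_dominated_loc_of_deriv_le (s := Metric.ball x 1) (Metric.ball_mem_nhds x one_pos)
    (F := fun y l => airyAux n y l) (F' := fun y l => airyAux (n + 1) y l)
    (bound := fun l : ℝ => |l| ^ (n + 1) * Real.exp (-(l ^ 4 / 4)))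
    (Eventually.of_forall fun y => (continuous_airyAux n y).aestronglyMeasurable)
    (integrable_airyAux n x) ((continuous_airyAux (n + 1) x).aestronglyMeasurable)
    (Eventually.of_forall fun l y _ => le_of_eq (norm_airyAux (n + 1) y l))
    (integrable_airyBound (n + 1))
    (Eventually.of_forall fun l y _ => hasDerivAt_airyAux n l y)
  exact this.2

set_option maxHeartbeats 800000 in
lemma integral_airyAux_three (x : ℝ) :
    (∫ l : ℝ, airyAux 3 x l) = x * ∫ l : ℝ, airyAux 0 x l := by
  set F : ℝ → ℂ := fun l => Complex.exp (Complex.I * l * x - l ^ 4 / 4) with hFdef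
  set F' : ℝ → ℂ := fun l => Complex.I * x * airyAux 0 x l - Complex.I * airyAux 3 x l
    with hF'def
  have hF : ∀ l : ℝ, HasDerivAt F (F' l) l := by
    intro l
    have h1 : HasDerivAt (fun z : ℂ => Complex.I * z * x) (Complex.I * x) (l : ℂ) := by
      simpa using ((hasDerivAt_id (l : ℂ)).const_mul Complex.I).mul_const (x : ℂ)
    have h2 : HasDerivAt (fun z : ℂ => z ^ 4 / 4) ((l : ℂ) ^ 3) (l : ℂ) := by
      have := (hasDerivAt_pow 4 (l : ℂ)).div_const 4
      norm_num at this
      exact this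
    have h3 := ((h1.sub h2).comp_ofReal).cexp
    convert h3 using 1
    show F' l = Complex.exp (Complex.I * l * x - l ^ 4 / 4) * (Complex.I * x - l ^ 3)
    simp only [hF'def, airyAux]
    linear_combination ((1 - Complex.I ^ 2) * (l:ℂ) ^ 3 *
      Complex.exp (Complex.I * l * x - l ^ 4 / 4)) * Complex.I_sq
    rfl
  have hint : Integrable F' :=
    ((integrable_airyAux 0 x).const_mul _).sub ((integrable_airyAux 3 x).const_mul _)
  have htop : Tendsto F atTop (𝓝 0) := by
    rw [tendsto_zero_iff_norm_tendsto_zero]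
    have hn : ∀ l : ℝ, ‖F l‖ = Real.exp (-(l ^ 4 / 4)) := by
      intro l
      have := norm_airyAux 0 x l
      simpa [airyAux, hFdef] using this
    simp only [hn]
    apply Real.tendsto_exp_atBot.comp
    apply tendsto_neg_atTop_atBot.comp
    exact Tendsto.atTop_div_const (by norm_num) (tendsto_pow_atTop (by norm_num))
  have hbot : Tendsto F atBot (𝓝 0) := by
    rw [tendsto_zero_iff_norm_tendsto_zero]
    have hn : ∀ l : ℝ, ‖F l‖ = Real.exp (-(l ^ 4 / 4)) := by
      intro l
      have := norm_airyAux 0 x l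
      simpa [airyAux, hFdef] using this
    simp only [hn]
    have h4 : Tendsto (fun l : ℝ => l ^ 4) atBot atTop := by
      have h := (tendsto_pow_atTop (n := 4) (by norm_num)).comp
        (tendsto_neg_atBot_atTop (G := ℝ))
      refine h.congr fun l => ?_
      show (-l) ^ 4 = l ^ 4
      ring
    exact Real.tendsto_exp_atBot.comp
      (tendsto_neg_atTop_atBot.comp (Tendsto.atTop_div_const (by norm_num) h4))
  have key : ∀ R : ℝ, (∫ l in (-R)..R, F' l) = F R - F (-R) := fun R =>
    intervalIntegral.integral_eq_sub_of_hasDerivAt (fun l _ => hF l)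
      hint.intervalIntegrable
  have limit1 : Tendsto (fun R : ℝ => ∫ l in (-R)..R, F' l) atTop (𝓝 (∫ l : ℝ, F' l)) :=
    intervalIntegral_tendsto_integral hint tendsto_neg_atTop_atBot tendsto_id
  have limit2 : Tendsto (fun R : ℝ => ∫ l in (-R)..R, F' l) atTop (𝓝 0) := by
    simp only [key]
    simpa using htop.sub (hbot.comp tendsto_neg_atTop_atBot)
  have hzero : (∫ l : ℝ, F' l) = 0 := tendsto_nhds_unique limit1 limit2
  rw [hF'def] at hzero
  rw [integral_sub ((integrable_airyAux 0 x).const_mul _) ((integrable_airyAux 3 x).const_mul _),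
    integral_const_mul, integral_const_mul, sub_eq_zero] at hzero
  have := hzero.symm
  rw [mul_assoc] at this
  exact mul_left_cancel₀ Complex.I_ne_zero this

end AiryAux

/-- The generalized Airy function of order 4 satisfies `φ''' = x·φ`. -/
theorem airy4_third_order_ode :
    ∀ x : ℝ, iteratedDeriv 3 φ x = (x : ℂ) * φ x := by
  intro x
  have hphi : φ = fun y : ℝ => (1 / (2 * (Real.pi : ℂ))) * ∫ l : ℝ, airyAux 0 y l := by
    funext y
    unfold φ airyAux
    simp
  have hd : ∀ n : ℕ, deriv (fun y : ℝ => (1 / (2 * (Real.pi : ℂ))) * ∫ l : ℝ, airyAux n y l)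
      = fun y : ℝ => (1 / (2 * (Real.pi : ℂ))) * ∫ l : ℝ, airyAux (n + 1) y l :=
    fun n => funext fun y => ((hasDerivAt_integral_airyAux n y).const_mul _).deriv
  rw [show (3:ℕ) = 0+1+1+1 from rfl, iteratedDeriv_succ, iteratedDeriv_succ, iteratedDeriv_succ,
    iteratedDeriv_zero, hphi, hd 0, hd 1, hd 2]
  simp only
  rw [integral_airyAux_three]
  ring
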